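/- arXiv:1908.01635 — 2 statements merged into one kernel-verified Lean document; each statement's English description precedes it below -/
import Mathlib

section
/- Let M and N be finite Kripke models with points w and u respectively. The following are equivalent: (i) for every point v of every finite n-model (any n), M, w ⊨ β(v) iff N, u ⊨ β(v); (ii) M, w and N, u satisfy exactly the same NNIL-formulas; (iii) M, w and N, u satisfy exactly the same MR-formulas. -/
/-! ## Formulas of intuitionistic propositional logic -/

inductive Formula : Type
  | bot : Formula
  | var : ℕ → Formula
  | and : Formula → Formula → Formula
  | or  : Formula → Formula → Formula
  | imp : Formula → Formula → Formula
  deriving DecidableEq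

namespace Formula

def top : Formula := imp bot bot

def iff_ (φ ψ : Formula) : Formula := and (imp φ ψ) (imp ψ φ)

/-- `φ` contains no implication at all. -/
def noImp : Formula → Prop
  | bot => True
  | var _ => True
  | and φ ψ => noImp φ ∧ noImp ψ
  | or φ ψ => noImp φ ∧ noImp ψ
  | imp _ _ => False

/-- NNIL-formulas: no nesting of implications to the left. -/
def IsNNIL : Formula → Prop
  | bot => True
  | var _ => True
  | and φ ψ => IsNNIL φ ∧ IsNNIL ψ
  | or φ ψ => IsNNIL φ ∧ IsNNIL ψ
  | imp φ ψ => noImp φ ∧ IsNNIL ψ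

/-- `φ` is an `n`-formula: all its propositional variables are among `p_0, …, p_{n-1}`. -/
def varsBelow (n : ℕ) : Formula → Prop
  | bot => True
  | var p => p < n
  | and φ ψ => varsBelow n φ ∧ varsBelow n ψ
  | or φ ψ => varsBelow n φ ∧ varsBelow n ψ
  | imp φ ψ => varsBelow n φ ∧ varsBelow n ψ

/-- the propositional variable `p` occurs in the formula -/
def occurs (p : ℕ) : Formula → Prop
  | bot => False
  | var q => q = p
  | and φ ψ => occurs p φ ∨ occurs p ψ
  | or φ ψ => occurs p φ ∨ occurs p ψ
  | imp φ ψ => occurs p φ ∨ occurs p ψ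

/-- uniform substitution -/
def subst (σ : ℕ → Formula) : Formula → Formula
  | bot => bot
  | var p => σ p
  | and φ ψ => and (subst σ φ) (subst σ ψ)
  | or φ ψ => or (subst σ φ) (subst σ ψ)
  | imp φ ψ => imp (subst σ φ) (subst σ ψ)

end Formula

/-- finite conjunction (empty conjunction is ⊤) -/
def listAnd : List Formula → Formula
  | [] => Formula.top
  | φ :: l => Formula.and φ (listAnd l)

/-- finite disjunction (empty disjunction is ⊥) -/
def listOr : List Formula → Formula
  | [] => Formula.bot
  | φ :: l => Formula.or φ (listOr l)

/-! ## Kripke structures, models and satisfaction -/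

/-- raw Kripke structure: worlds, relation, Boolean valuation -/
structure KStruct where
  W : Type
  R : W → W → Prop
  V : W → ℕ → Bool

namespace KStruct

/-- a Kripke model: `R` is a partial order and `V` is persistent -/
def IsModel (M : KStruct) : Prop :=
  (∀ w, M.R w w) ∧
  (∀ w u v, M.R w u → M.R u v → M.R w v) ∧
  (∀ w u, M.R w u → M.R u w → w = u) ∧
  (∀ w u p, M.R w u → M.V w p = true → M.V u p = true)

/-- an `n`-model: a Kripke model whose valuation is restricted to the variables `p_0,…,p_{n-1}` -/
def IsNModel (M : KStruct) (n : ℕ) : Prop :=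
  M.IsModel ∧ ∀ w p, n ≤ p → M.V w p = false

/-- intuitionistic satisfaction -/
def sat (M : KStruct) : M.W → Formula → Prop
  | _, Formula.bot => False
  | w, Formula.var p => M.V w p = true
  | w, Formula.and φ ψ => M.sat w φ ∧ M.sat w ψ
  | w, Formula.or φ ψ => M.sat w φ ∨ M.sat w ψ
  | w, Formula.imp φ ψ => ∀ u, M.R w u → M.sat u φ → M.sat u ψ

/-- the submodel on a subset of the worlds -/
def restrict (M : KStruct) (S : Set M.W) : KStruct where
  W := S
  R := fun a b => M.R a.1 b.1
  V := fun a p => M.V a.1 p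

end KStruct

/-- monotonic map between Kripke structures: preserves the order and the colors -/
def Monotonic (M N : KStruct) (f : M.W → N.W) : Prop :=
  (∀ w u, M.R w u → N.R (f w) (f u)) ∧ (∀ w p, N.V (f w) p = M.V w p)

/-- p-morphism: a monotonic map satisfying the forth condition -/
def PMorphism (M N : KStruct) (f : M.W → N.W) : Prop :=
  Monotonic M N f ∧ ∀ w u', N.R (f w) u' → ∃ u, M.R w u ∧ f u = u'

/-- MR: the class of formulas reflected by monotonic maps between Kripke models -/
def MR (φ : Formula) : Prop :=
  ∀ (N M : KStruct), N.IsModel → M.IsModel →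
    ∀ f : N.W → M.W, Monotonic N M f → ∀ w : N.W, M.sat (f w) φ → N.sat w φ

/-- `r` is a root of `M` -/
def IsRoot (M : KStruct) (r : M.W) : Prop := ∀ w, M.R r w

/-- `M` is tree-like with root `r`: rooted, and each point has a finite,
linearly ordered set of predecessors -/
def IsTree (M : KStruct) (r : M.W) : Prop :=
  IsRoot M r ∧ (∀ w : M.W, {u | M.R u w}.Finite) ∧
  (∀ w u v : M.W, M.R u w → M.R v w → (M.R u v ∨ M.R v u))

/-- `u` is an immediate (proper) successor of `w` -/
def ImmSucc (M : KStruct) (w u : M.W) : Prop :=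
  M.R w u ∧ w ≠ u ∧ ∀ v, M.R w v → M.R v u → v = w ∨ v = u

/-- `S` carries a color-preserving submodel of `M` -/
def ColorPresSub (M : KStruct) (S : Set M.W) : Prop :=
  ∀ w ∈ S, ∀ u, M.R w u → ∃ v ∈ S, M.R w v ∧ ∀ p, M.V v p = M.V u p

/-! ## The β-formulas of finite models -/

/-- the variables among `p_0,…,p_{n-1}` true at `w` -/
def propList (M : KStruct) (n : ℕ) (w : M.W) : List Formula :=
  ((List.range n).filter (fun p => M.V w p)).map Formula.var

/-- the variables among `p_0,…,p_{n-1}` false at `w` -/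
def notpropList (M : KStruct) (n : ℕ) (w : M.W) : List Formula :=
  ((List.range n).filter (fun p => !(M.V w p))).map Formula.var

open Classical in
/-- the immediate successors of `w`, as a list -/
noncomputable def immSuccList (M : KStruct) [Fintype M.W] (w : M.W) : List M.W :=
  (Finset.univ.filter (fun u => ImmSucc M w u)).toList

/-- β(w), defined by recursion on the depth of `w` (computed with enough fuel):
`β(w) = ⋀prop(w) → (⋁notprop(w) ∨ β(w_1) ∨ … ∨ β(w_k))` where the `w_i` are the
immediate successors of `w` (for maximal `w` the last disjunct is the empty disjunction). -/
noncomputable def betaFuel (M : KStruct) [Fintype M.W] (n : ℕ) : ℕ → M.W → Formula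
  | 0, _ => Formula.bot
  | (k+1), w =>
      Formula.imp (listAnd (propList M n w))
        (listOr (notpropList M n w ++ (immSuccList M w).map (fun u => betaFuel M n k u)))

/-- β(w) for a point `w` of a finite `n`-model: `Fintype.card M.W` is an upper bound
for the depth of any point, so the recursion above never runs out of fuel. -/
noncomputable def beta (M : KStruct) [inst : Fintype M.W] (n : ℕ) (w : M.W) : Formula :=
  betaFuel M n (Fintype.card M.W) w

/-! ## Unravelings -/

/-- the unraveling `T_N` of a rooted model `(N, r)`: points are the finite sequences
`⟨r, w_1, …, w_k⟩` in which each entry is an immediate successor of the preceding one,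
ordered by the initial-segment relation; such a sequence satisfies the same variables
as its last entry. -/
def Unravel (M : KStruct) (r : M.W) : KStruct where
  W := {l : List M.W // l.head? = some r ∧ List.Chain' (ImmSucc M) l}
  R := fun σ τ => σ.1 <+: τ.1
  V := fun σ p => (σ.1.getLast?.map (fun w => M.V w p)).getD false

/-! ## Kripke frames -/

structure KFrame where
  W : Type
  R : W → W → Prop

namespace KFrame

/-- a Kripke frame: `R` is a partial order -/
def IsFrame (F : KFrame) : Prop :=
  (∀ w, F.R w w) ∧ (∀ w u v, F.R w u → F.R u v → F.R w v) ∧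
  (∀ w u, F.R w u → F.R u w → w = u)

def Persistent (F : KFrame) (V : F.W → ℕ → Bool) : Prop :=
  ∀ w u p, F.R w u → V w p = true → V u p = true

/-- the model on `F` given by a valuation -/
def model (F : KFrame) (V : F.W → ℕ → Bool) : KStruct := ⟨F.W, F.R, V⟩

/-- `F ⊨ φ` : `φ` is true at every point of every model on `F` -/
def valid (F : KFrame) (φ : Formula) : Prop :=
  ∀ V, F.Persistent V → ∀ w, (F.model V).sat w φ

/-- the substructure of `F` on a subset `S` of its domain, with the restricted order -/
def restrictF (F : KFrame) (S : Set F.W) : KFrame :=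
  ⟨S, fun a b => F.R a.1 b.1⟩

end KFrame

/-- a monotonic map from a model `N` into a frame `F` which is color-consistent:
`f(w) R f(u)` implies `col(w) ≤ col(u)` -/
def ColorConsistentMap (N : KStruct) (F : KFrame) (f : N.W → F.W) : Prop :=
  (∀ w u, N.R w u → F.R (f w) (f u)) ∧
  (∀ w u, F.R (f w) (f u) → ∀ p, N.V w p = true → N.V u p = true)


/-!
NNIL-formulas are reflected by monotonic maps, since an implication-free antecedent only sees
the colour of a point; so (iii) implies (ii). Currying the antecedent of `β(v)` gives an
equivalent NNIL-formula; so (ii) implies (i).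

For (i) ⇒ (iii), let `a` in `K` refute `β(b)` for a point `b` of a finite model `P`. The pairs
`(v, k)` in which `k` has the colour of `v` and refutes `β` of every immediate successor of `v`,
ordered componentwise and coloured as in `K`, form a model. Its second projection to `K` is
monotonic, and unfolding the refutations along immediate successors shows that its first
projection has the forth property, hence preserves truth of `n`-formulas. So every MR
`n`-formula true at `a` is true at `b`. Every point refutes its own `β`; by (i), `w` refutes
`β(u)`, and MR-formulas true at `w` hold at `u`, and symmetrically.
-/

namespace Formula

def maxVar : Formula → ℕ
  | bot => 0
  | var p => p + 1
  | and φ ψ | or φ ψ | imp φ ψ => max φ.maxVar ψ.maxVar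

theorem varsBelow_of_maxVar_le {n : ℕ} : ∀ {φ : Formula}, φ.maxVar ≤ n → φ.varsBelow n
  | bot, _ => trivial
  | var _, h => h
  | and _ _, h | or _ _, h | imp _ _, h =>
      ⟨varsBelow_of_maxVar_le (le_of_max_le_left h), varsBelow_of_maxVar_le (le_of_max_le_right h)⟩

theorem varsBelow_maxVar (φ : Formula) : φ.varsBelow φ.maxVar :=
  varsBelow_of_maxVar_le le_rfl

end Formula

namespace KStruct

variable {M : KStruct}

theorem sat_top (w : M.W) : M.sat w Formula.top := fun _ _ h => h

theorem sat_mono (hM : M.IsModel) {w u : M.W} (h : M.R w u) :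
    ∀ {φ : Formula}, M.sat w φ → M.sat u φ
  | .bot, hw => hw
  | .var p, hw => hM.2.2.2 w u p h hw
  | .and _ _, hw => ⟨sat_mono hM h hw.1, sat_mono hM h hw.2⟩
  | .or _ _, hw => Or.imp (sat_mono hM h) (sat_mono hM h) hw
  | .imp _ _, hw => fun v huv => hw v (hM.2.1 w u v h huv)

theorem sat_listAnd {w : M.W} : ∀ {l : List Formula}, M.sat w (listAnd l) ↔ ∀ φ ∈ l, M.sat w φ
  | [] => by simpa [listAnd] using sat_top w
  | φ :: l => by simp [listAnd, sat, sat_listAnd]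

theorem sat_listOr {w : M.W} : ∀ {l : List Formula}, M.sat w (listOr l) ↔ ∃ φ ∈ l, M.sat w φ
  | [] => by simp [listOr, sat]
  | φ :: l => by simp [listOr, sat, sat_listOr]

theorem sat_listOr_append {w : M.W} {l₁ l₂ : List Formula} :
    M.sat w (listOr (l₁ ++ l₂)) ↔ M.sat w (listOr l₁) ∨ M.sat w (listOr l₂) := by
  simp only [sat_listOr, List.mem_append, or_and_right, exists_or]

theorem sat_iff_of_noImp {N : KStruct} {w : M.W} {u : N.W} (h : ∀ p, M.V w p = N.V u p) :
    ∀ {φ : Formula}, φ.noImp → (M.sat w φ ↔ N.sat u φ)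
  | .bot, _ => Iff.rfl
  | .var p, _ => by simp [sat, h p]
  | .and _ _, hφ => and_congr (sat_iff_of_noImp h hφ.1) (sat_iff_of_noImp h hφ.2)
  | .or _ _, hφ => or_congr (sat_iff_of_noImp h hφ.1) (sat_iff_of_noImp h hφ.2)

end KStruct

theorem Monotonic.sat_of_sat_map {N M : KStruct} {f : N.W → M.W} (hf : Monotonic N M f) :
    ∀ {φ : Formula}, φ.IsNNIL → ∀ {w : N.W}, M.sat (f w) φ → N.sat w φ
  | .bot, _, _, hw => hw
  | .var p, _, w, hw => (hf.2 w p).symm.trans hw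
  | .and _ _, hφ, _, hw => ⟨hf.sat_of_sat_map hφ.1 hw.1, hf.sat_of_sat_map hφ.2 hw.2⟩
  | .or _ _, hφ, _, hw => Or.imp (hf.sat_of_sat_map hφ.1) (hf.sat_of_sat_map hφ.2) hw
  | .imp _ _, hφ, w, hw => fun u hu hφu =>
      hf.sat_of_sat_map hφ.2 <|
        hw (f u) (hf.1 w u hu) ((KStruct.sat_iff_of_noImp (hf.2 u) hφ.1).2 hφu)

theorem Formula.IsNNIL.mr {φ : Formula} (hφ : φ.IsNNIL) : MR φ :=
  fun _ _ _ _ _ hf _ => hf.sat_of_sat_map hφ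

namespace KStruct

open Classical in
/-- The number of strict successors of `v`: a bound on the depth of `v`, hence on the fuel
`betaFuel` needs. -/
noncomputable def ioiCard (M : KStruct) [Fintype M.W] (v : M.W) : ℕ :=
  (Finset.univ.filter fun x => M.R v x ∧ v ≠ x).card

variable {M : KStruct} [Fintype M.W]

theorem ioiCard_lt_of_R (hM : M.IsModel) {v x : M.W} (h : M.R v x) (hne : v ≠ x) :
    M.ioiCard x < M.ioiCard v := by
  classical
  refine Finset.card_lt_card ⟨fun y hy => ?_, fun hsub => ?_⟩
  · simp only [Finset.mem_filter, Finset.mem_univ, true_and] at hy ⊢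
    exact ⟨hM.2.1 v x y h hy.1, fun hvy => hne (hM.2.2.1 v x h (hvy ▸ hy.1))⟩
  · simpa using hsub (by simpa using ⟨h, hne⟩ : x ∈ Finset.univ.filter fun y => M.R v y ∧ v ≠ y)

theorem ioiCard_lt_card (v : M.W) : M.ioiCard v < Fintype.card M.W := by
  classical
  exact Finset.card_lt_card (Finset.filter_ssubset.2 ⟨v, Finset.mem_univ v, fun h => h.2 rfl⟩)

/-- Among the points of `(v, v']`, one with the most strict successors is immediate above `v`. -/
theorem exists_immSucc_R (hM : M.IsModel) {v v' : M.W} (h : M.R v v') (hne : v ≠ v') :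
    ∃ x, ImmSucc M v x ∧ M.R x v' := by
  classical
  obtain ⟨x, hx, hmax⟩ := Finset.exists_max_image
    (Finset.univ.filter fun x => M.R v x ∧ v ≠ x ∧ M.R x v') M.ioiCard
    ⟨v', by simpa using ⟨h, hne, hM.1 v'⟩⟩
  simp only [Finset.mem_filter, Finset.mem_univ, true_and] at hx hmax
  refine ⟨x, ⟨hx.1, hx.2.1, fun z hvz hzx => ?_⟩, hx.2.2⟩
  by_contra! hz
  exact (hmax z ⟨hvz, Ne.symm hz.1, hM.2.1 z x v' hzx hx.2.2⟩).not_gt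
    (ioiCard_lt_of_R hM hzx hz.2)

end KStruct

section Beta

open KStruct

variable {P : KStruct} {n : ℕ}

theorem sat_propList_and_not_sat_notpropList_iff {K : KStruct} {v : P.W} {k : K.W} :
    K.sat k (listAnd (propList P n v)) ∧ ¬ K.sat k (listOr (notpropList P n v)) ↔
      ∀ p < n, K.V k p = P.V v p := by
  simp only [sat_listAnd, propList, List.forall_mem_map]
  simp only [sat_listOr, notpropList, List.mem_map, List.mem_filter, List.mem_range, sat,
    exists_exists_and_eq_and, not_exists, not_and, and_imp, Bool.not_eq_eq_eq_not, Bool.not_true,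
    Bool.not_eq_true]
  refine ⟨fun h p hp => ?_, fun h =>
    ⟨fun p hp hv => (h p hp).trans hv, fun p hp hv => (h p hp).trans hv⟩⟩
  cases hv : P.V v p
  · exact h.2 p hp hv
  · exact h.1 p hp hv

variable [Fintype P.W]

theorem mem_immSuccList {v x : P.W} : x ∈ immSuccList P v ↔ ImmSucc P v x := by
  classical
  simp [immSuccList]

theorem betaFuel_eq_betaFuel (hP : P.IsModel) :
    ∀ {m m' : ℕ} {v : P.W}, P.ioiCard v < m → P.ioiCard v < m' →
      betaFuel P n m v = betaFuel P n m' v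
  | m + 1, m' + 1, v, hm, hm' => by
      simp only [betaFuel]
      congr 3
      refine List.map_congr_left fun x hx => ?_
      have hx := mem_immSuccList.1 hx
      have := ioiCard_lt_of_R hP hx.1 hx.2.1
      exact betaFuel_eq_betaFuel hP (by omega) (by omega)

theorem beta_eq_betaFuel (hP : P.IsModel) {m : ℕ} {v : P.W} (h : P.ioiCard v < m) :
    beta P n v = betaFuel P n m v :=
  betaFuel_eq_betaFuel hP (ioiCard_lt_card v) h

theorem not_sat_betaFuel_succ_iff {K : KStruct} {m : ℕ} {v : P.W} {k : K.W} :
    ¬ K.sat k (betaFuel P n (m + 1) v) ↔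
      ∃ k', K.R k k' ∧ (∀ p < n, K.V k' p = P.V v p) ∧
        ∀ x, ImmSucc P v x → ¬ K.sat k' (betaFuel P n m x) := by
  simp only [betaFuel, sat, not_forall, exists_prop, sat_listOr_append, not_or]
  refine exists_congr fun k' => and_congr_right fun _ => ?_
  rw [← and_assoc, sat_propList_and_not_sat_notpropList_iff]
  refine and_congr_right fun _ => ?_
  simp [sat_listOr, mem_immSuccList]

theorem not_sat_betaFuel_self (hP : P.IsModel) : ∀ (m : ℕ) (v : P.W), ¬ P.sat v (betaFuel P n m v)
  | 0, _ => id
  | m + 1, v => not_sat_betaFuel_succ_iff.2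
      ⟨v, hP.1 v, fun _ _ => rfl, fun x hx hs => not_sat_betaFuel_self hP m x (sat_mono hP hx.1 hs)⟩

theorem not_sat_beta_self (hP : P.IsModel) (v : P.W) : ¬ P.sat v (beta P n v) :=
  not_sat_betaFuel_self hP _ v

theorem not_sat_beta_iff (hP : P.IsModel) {K : KStruct} {v : P.W} {k : K.W} :
    ¬ K.sat k (beta P n v) ↔
      ∃ k', K.R k k' ∧ (∀ p < n, K.V k' p = P.V v p) ∧
        ∀ x, ImmSucc P v x → ¬ K.sat k' (beta P n x) := by
  rw [beta_eq_betaFuel hP (Nat.lt_succ_self _), not_sat_betaFuel_succ_iff]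
  refine exists_congr fun k' => and_congr_right fun _ => and_congr_right fun _ =>
    forall_congr' fun x => forall_congr' fun hx => ?_
  rw [beta_eq_betaFuel hP (ioiCard_lt_of_R hP hx.1 hx.2.1)]

end Beta

def pairModel (P K : KStruct) [Fintype P.W] (n : ℕ) : KStruct where
  W := {q : P.W × K.W // (∀ p < n, K.V q.2 p = P.V q.1 p) ∧
    ∀ x, ImmSucc P q.1 x → ¬ K.sat q.2 (beta P n x)}
  R s t := P.R s.1.1 t.1.1 ∧ K.R s.1.2 t.1.2
  V s := K.V s.1.2

namespace pairModel

open KStruct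

variable {P K : KStruct} [Fintype P.W] {n : ℕ}

theorem isModel (hP : P.IsModel) (hK : K.IsModel) : (pairModel P K n).IsModel :=
  ⟨fun _ => ⟨hP.1 _, hK.1 _⟩,
    fun _ _ _ hst htr => ⟨hP.2.1 _ _ _ hst.1 htr.1, hK.2.1 _ _ _ hst.2 htr.2⟩,
    fun _ _ hst hts => Subtype.ext (Prod.ext (hP.2.2.1 _ _ hst.1 hts.1) (hK.2.2.1 _ _ hst.2 hts.2)),
    fun _ _ p hst => hK.2.2.2 _ _ p hst.2⟩

theorem monotonic_snd : Monotonic (pairModel P K n) K (fun s => s.1.2) :=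
  ⟨fun _ _ h => h.2, fun _ _ => rfl⟩

theorem exists_of_not_sat_beta (hP : P.IsModel) {b : P.W} {a : K.W}
    (h : ¬ K.sat a (beta P n b)) : ∃ s : (pairModel P K n).W, s.1.1 = b ∧ K.R a s.1.2 := by
  obtain ⟨k, hak, hk⟩ := (not_sat_beta_iff hP).1 h
  exact ⟨⟨(b, k), hk⟩, rfl, hak⟩

theorem exists_R_fst (hP : P.IsModel) (hK : K.IsModel) (s : (pairModel P K n).W) {v : P.W}
    (h : P.R s.1.1 v) : ∃ t, (pairModel P K n).R s t ∧ t.1.1 = v := by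
  induction hc : P.ioiCard s.1.1 using Nat.strong_induction_on generalizing s with
  | _ c ih =>
    by_cases hsv : s.1.1 = v
    · exact ⟨s, (isModel hP hK).1 s, hsv⟩
    obtain ⟨x, hx, hxv⟩ := exists_immSucc_R hP h hsv
    obtain ⟨s', rfl, hss'⟩ := exists_of_not_sat_beta (K := K) hP (s.2.2 x hx)
    obtain ⟨t, hs't, rfl⟩ := ih _ (hc ▸ ioiCard_lt_of_R hP hx.1 hx.2.1) s' hxv rfl
    exact ⟨t, ⟨hP.2.1 _ _ _ hx.1 hs't.1, hK.2.1 _ _ _ hss' hs't.2⟩, rfl⟩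

theorem sat_iff (hP : P.IsModel) (hK : K.IsModel) :
    ∀ {φ : Formula}, φ.varsBelow n → ∀ s : (pairModel P K n).W,
      (pairModel P K n).sat s φ ↔ P.sat s.1.1 φ
  | .bot, _, _ => Iff.rfl
  | .var p, hp, s => by simp only [sat, pairModel, s.2.1 p hp]
  | .and _ _, hφ, s => and_congr (sat_iff hP hK hφ.1 s) (sat_iff hP hK hφ.2 s)
  | .or _ _, hφ, s => or_congr (sat_iff hP hK hφ.1 s) (sat_iff hP hK hφ.2 s)
  | .imp _ _, hφ, s => by
    refine ⟨fun h v hv hφv => ?_, fun h t hst hφt => ?_⟩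
    · obtain ⟨t, hst, rfl⟩ := exists_R_fst hP hK s hv
      exact (sat_iff hP hK hφ.2 t).1 (h t hst ((sat_iff hP hK hφ.1 t).2 hφv))
    · exact (sat_iff hP hK hφ.2 t).2 (h t.1.1 hst.1 ((sat_iff hP hK hφ.1 t).1 hφt))

end pairModel

open KStruct

theorem MR.sat_of_not_sat_beta {φ : Formula} (hφ : MR φ) {P K : KStruct} [Fintype P.W] {n : ℕ}
    (hP : P.IsModel) (hK : K.IsModel) (hn : φ.varsBelow n) {b : P.W} {a : K.W}
    (hβ : ¬ K.sat a (beta P n b)) (ha : K.sat a φ) : P.sat b φ := by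
  obtain ⟨s, rfl, has⟩ := pairModel.exists_of_not_sat_beta hP hβ
  refine (pairModel.sat_iff hP hK hn s).1 ?_
  exact hφ _ K (pairModel.isModel hP hK) hK _ pairModel.monotonic_snd s (sat_mono hK has ha)

namespace KStruct

def truncate (M : KStruct) (n : ℕ) : KStruct := ⟨M.W, M.R, fun w p => decide (p < n) && M.V w p⟩

instance (M : KStruct) [h : Fintype M.W] (n : ℕ) : Fintype (M.truncate n).W := h

variable {M : KStruct}

theorem IsModel.truncate (hM : M.IsModel) (n : ℕ) : (M.truncate n).IsNModel n := by
  refine ⟨⟨hM.1, hM.2.1, hM.2.2.1, fun w u p h hw => ?_⟩,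
    fun w p hp => by simp [KStruct.truncate, hp]⟩
  simp only [KStruct.truncate, Bool.and_eq_true] at hw ⊢
  exact ⟨hw.1, hM.2.2.2 w u p h hw.2⟩

theorem betaFuel_truncate [Fintype M.W] (n : ℕ) :
    ∀ (m : ℕ) (v : M.W), betaFuel (M.truncate n) n m v = betaFuel M n m v
  | 0, _ => rfl
  | m + 1, v => by
    have hprop : propList (M.truncate n) n v = propList M n v := by
      simp only [propList, truncate]
      congr 1
      exact List.filter_congr fun p hp => by simp [List.mem_range.1 hp]
    have hnotprop : notpropList (M.truncate n) n v = notpropList M n v := by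
      simp only [notpropList, truncate]
      congr 1
      exact List.filter_congr fun p hp => by simp [List.mem_range.1 hp]
    simp only [betaFuel, hprop, hnotprop]
    have : betaFuel (M.truncate n) n m = betaFuel M n m := funext (betaFuel_truncate n m)
    rw [this]
    rfl

theorem beta_truncate [Fintype M.W] (n : ℕ) (v : M.W) : beta (M.truncate n) n v = beta M n v :=
  betaFuel_truncate n _ v

end KStruct

def impList : List Formula → Formula → Formula
  | [], ψ => ψ
  | φ :: l, ψ => Formula.imp φ (impList l ψ)

theorem KStruct.sat_impList {M : KStruct} (hM : M.IsModel) {ψ : Formula} :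
    ∀ {l : List Formula} {w : M.W}, M.sat w (impList l ψ) ↔ M.sat w (.imp (listAnd l) ψ)
  | [], w => ⟨fun h u hu _ => sat_mono hM hu h, fun h => h w (hM.1 w) (sat_top w)⟩
  | φ :: l, w => by
    refine ⟨fun h u hu hφl => ?_, fun h u hu hφ => sat_impList hM |>.2 fun u' hu' hl => ?_⟩
    · exact (sat_impList hM).1 (h u hu hφl.1) u (hM.1 u) hφl.2
    · exact h u' (hM.2.1 w u u' hu hu') ⟨sat_mono hM hu' hφ, hl⟩

theorem Formula.isNNIL_impList {ψ : Formula} (hψ : ψ.IsNNIL) :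
    ∀ {l : List Formula}, (∀ φ ∈ l, φ.noImp) → (impList l ψ).IsNNIL
  | [], _ => hψ
  | φ :: _, hl =>
    ⟨hl φ List.mem_cons_self, isNNIL_impList hψ fun χ hχ => hl χ (List.mem_cons_of_mem _ hχ)⟩

theorem Formula.isNNIL_listOr : ∀ {l : List Formula}, (∀ φ ∈ l, φ.IsNNIL) → (listOr l).IsNNIL
  | [], _ => trivial
  | φ :: _, hl =>
    ⟨hl φ List.mem_cons_self, isNNIL_listOr fun χ hχ => hl χ (List.mem_cons_of_mem _ hχ)⟩

/-- The antecedent `⋀prop(v)` of β ends in `⊤ = ⊥ → ⊥`, so β itself is not NNIL; currying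
removes it. -/
theorem exists_isNNIL_iff_betaFuel (P : KStruct) [Fintype P.W] (n : ℕ) :
    ∀ (m : ℕ) (v : P.W), ∃ ψ : Formula, ψ.IsNNIL ∧
      ∀ K : KStruct, K.IsModel → ∀ k : K.W, K.sat k (betaFuel P n m v) ↔ K.sat k ψ
  | 0, _ => ⟨.bot, trivial, fun _ _ _ => Iff.rfl⟩
  | m + 1, v => by
    choose ψ hψ hψβ using exists_isNNIL_iff_betaFuel P n m
    refine ⟨impList (propList P n v) (listOr (notpropList P n v ++ (immSuccList P v).map ψ)),
      Formula.isNNIL_impList (Formula.isNNIL_listOr ?_) ?_, fun K hK k => ?_⟩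
    · simp only [List.mem_append, notpropList, List.mem_map]
      rintro _ (⟨p, -, rfl⟩ | ⟨x, -, rfl⟩)
      exacts [trivial, hψ x]
    · simp only [propList, List.mem_map]
      rintro _ ⟨p, -, rfl⟩
      trivial
    · rw [sat_impList hK]
      simp only [betaFuel, sat, sat_listOr_append]
      refine forall₃_congr fun k' _ _ => or_congr Iff.rfl ?_
      simp only [sat_listOr, List.mem_map, exists_exists_and_eq_and, hψβ _ K hK]

theorem beta_iff_of_isNNIL_iff {M N : KStruct} (hM : M.IsModel) (hN : N.IsModel) {w : M.W}
    {u : N.W} (h : ∀ φ : Formula, φ.IsNNIL → (M.sat w φ ↔ N.sat u φ)) (P : KStruct) [Fintype P.W]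
    (n : ℕ) (v : P.W) : M.sat w (beta P n v) ↔ N.sat u (beta P n v) := by
  obtain ⟨ψ, hψ, hψβ⟩ := exists_isNNIL_iff_betaFuel P n _ v
  rw [beta, hψβ M hM, hψβ N hN]
  exact h ψ hψ

theorem MR.sat_of_beta_truncate {φ : Formula} (hφ : MR φ) {M N : KStruct} [Fintype N.W]
    (hM : M.IsModel) (hN : N.IsModel) {w : M.W} {u : N.W}
    (h : ∀ n, M.sat w (beta (N.truncate n) n u) → N.sat u (beta (N.truncate n) n u))
    (hw : M.sat w φ) : N.sat u φ := by
  refine hφ.sat_of_not_sat_beta hN hM φ.varsBelow_maxVar (fun hβ => ?_) hw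
  have := h φ.maxVar (by rwa [beta_truncate])
  rw [beta_truncate] at this
  exact not_sat_beta_self hN u this

theorem MR.iff_of_beta_iff {φ : Formula} (hφ : MR φ) {M N : KStruct} [Fintype M.W]
    [Fintype N.W] (hM : M.IsModel) (hN : N.IsModel) {w : M.W} {u : N.W}
    (h : ∀ (n : ℕ) (P : KStruct) (_ : Fintype P.W), P.IsNModel n →
      ∀ v : P.W, M.sat w (beta P n v) ↔ N.sat u (beta P n v)) :
    M.sat w φ ↔ N.sat u φ :=
  ⟨hφ.sat_of_beta_truncate hM hN fun n => (h n _ _ (hN.truncate n) u).1,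
    hφ.sat_of_beta_truncate hN hM fun n => (h n _ _ (hM.truncate n) w).2⟩

/-- for finite Kripke models with distinguished points, agreement on all
β-formulas, agreement on all NNIL-formulas, and agreement on all MR-formulas coincide. -/
theorem beta_nnil_mr_equivalence
    (M N : KStruct) [Fintype M.W] [Fintype N.W]
    (hM : M.IsModel) (hN : N.IsModel) (w : M.W) (u : N.W) :
    ((∀ (n : ℕ) (P : KStruct) (instP : Fintype P.W), P.IsNModel n →
        ∀ v : P.W, (M.sat w (@beta P instP n v) ↔ N.sat u (@beta P instP n v)))
      ↔ (∀ φ : Formula, φ.IsNNIL → (M.sat w φ ↔ N.sat u φ)))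
    ∧ ((∀ φ : Formula, φ.IsNNIL → (M.sat w φ ↔ N.sat u φ))
      ↔ (∀ φ : Formula, MR φ → (M.sat w φ ↔ N.sat u φ))) := by
  have nnil_beta (h : ∀ φ : Formula, φ.IsNNIL → (M.sat w φ ↔ N.sat u φ)) (n : ℕ) (P : KStruct)
      (_ : Fintype P.W) (_ : P.IsNModel n) (v : P.W) :=
    beta_iff_of_isNNIL_iff hM hN h P n v
  exact ⟨⟨fun h φ hφ => hφ.mr.iff_of_beta_iff hM hN h, nnil_beta⟩,
    ⟨fun h _ hφ => hφ.iff_of_beta_iff hM hN (nnil_beta h), fun h φ hφ => h φ hφ.mr⟩⟩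
end

section
/- Let F = (W, R) be a Kripke frame and G = (W', R↾W') a substructure of F (W' ⊆ W with the restricted order). For every finite rooted n-model N: if F ⊨ β(N) then G ⊨ β(N). That is, validity of β-formulas is preserved under arbitrary substructures of Kripke frames. -/
lemma sat_listAnd (M : KStruct) (w : M.W) (L : List Formula) :
    M.sat w (listAnd L) ↔ ∀ φ ∈ L, M.sat w φ := by
  induction L with
  | nil => simp [listAnd, Formula.top, KStruct.sat]
  | cons φ l ih => simp [listAnd, KStruct.sat, ih]

lemma sat_listOr (M : KStruct) (w : M.W) (L : List Formula) :
    M.sat w (listOr L) ↔ ∃ φ ∈ L, M.sat w φ := by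
  induction L with
  | nil => simp [listOr, KStruct.sat]
  | cons φ l ih => simp [listOr, KStruct.sat, ih]

lemma mem_propList {M : KStruct} {n : ℕ} {w : M.W} {φ : Formula}
    (h : φ ∈ propList M n w) : ∃ p, φ = Formula.var p := by
  simp only [propList, List.mem_map] at h
  obtain ⟨p, _, rfl⟩ := h
  exact ⟨p, rfl⟩

lemma mem_notpropList {M : KStruct} {n : ℕ} {w : M.W} {φ : Formula}
    (h : φ ∈ notpropList M n w) : ∃ p, φ = Formula.var p := by
  simp only [notpropList, List.mem_map] at h
  obtain ⟨p, _, rfl⟩ := h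
  exact ⟨p, rfl⟩

/-- betaFuel formulas are reflected by monotonic maps (no frame axioms needed). -/
lemma betaFuel_reflect (N : KStruct) [Fintype N.W] (n : ℕ)
    (M M' : KStruct) (f : M'.W → M.W)
    (hord : ∀ w u, M'.R w u → M.R (f w) (f u))
    (hcol : ∀ w p, M.V (f w) p = M'.V w p) :
    ∀ (k : ℕ) (u : N.W) (w : M'.W),
      M.sat (f w) (betaFuel N n k u) → M'.sat w (betaFuel N n k u) := by
  intro k
  induction k with
  | zero => intro u w h; exact h
  | succ k ih =>
    intro u w h
    simp only [betaFuel] at h ⊢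
    intro v hv hA
    have hAf : M.sat (f v) (listAnd (propList N n u)) := by
      rw [sat_listAnd] at hA ⊢
      intro φ hφ
      obtain ⟨p, rfl⟩ := mem_propList hφ
      have := hA _ hφ
      simpa [KStruct.sat, hcol] using this
    have hB := h (f v) (hord _ _ hv) hAf
    rw [sat_listOr] at hB ⊢
    obtain ⟨φ, hφmem, hφsat⟩ := hB
    refine ⟨φ, hφmem, ?_⟩
    rcases List.mem_append.mp hφmem with hmem | hmem
    · obtain ⟨p, rfl⟩ := mem_notpropList hmem
      simpa [KStruct.sat, hcol] using hφsat
    · obtain ⟨u', _, rfl⟩ := List.mem_map.mp hmem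
      exact ih u' v hφsat

/-- validity of β-formulas is preserved under arbitrary substructures
of Kripke frames. -/
theorem beta_preserved_by_substructures (F : KFrame) (hF : F.IsFrame) (S : Set F.W)
    (n : ℕ) (N : KStruct) [Fintype N.W] (hN : N.IsNModel n) (r : N.W) (hr : IsRoot N r)
    (h : F.valid (beta N n r)) : (F.restrictF S).valid (beta N n r) := by
  intro V hV w
  classical
  -- extend V to F
  set V' : F.W → ℕ → Bool := fun x p => decide (∃ s : S, F.R s.1 x ∧ V s p = true) with hV'
  have hpers : F.Persistent V' := by
    intro x y p hxy hx
    simp only [hV', decide_eq_true_eq] at hx ⊢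
    obtain ⟨s, hs, hsp⟩ := hx
    exact ⟨s, hF.2.1 _ _ _ hs hxy, hsp⟩
  have hcol : ∀ (v : (F.restrictF S).W) (p : ℕ), V' v.1 p = V v p := by
    intro v p
    simp only [hV']
    by_cases hvp : V v p = true
    · rw [hvp]
      simp only [decide_eq_true_eq]
      exact ⟨v, hF.1 v.1, hvp⟩
    · simp only [Bool.not_eq_true] at hvp
      rw [hvp]
      simp only [decide_eq_false_iff_not]
      rintro ⟨s, hs, hsp⟩
      have : V v p = true := hV s v p hs hsp
      simp [this] at hvp
  have hsat := h V' hpers w.1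
  exact betaFuel_reflect N n (F.model V') ((F.restrictF S).model V)
    (fun v => v.1) (fun _ _ hwu => hwu) (fun v p => hcol v p)
    (Fintype.card N.W) r w hsat
end
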